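/- Let a and b be positive integers. The number of free Motzkin paths of type (a+b, −b) that start with a down step D or a flat step F equals Σ_{i=0}^{a} multinomial(a+b−1 ; ⌊i/2⌋, b+⌊(i−1)/2⌋, a−i), where multinomial(n; x,y,z) = n!/(x!·y!·z!) for x+y+z = n (and ⌊(i−1)/2⌋ = −1 when i = 0, so the i=0 term is multinomial(a+b−1; 0, b−1, a)). -/

import Mathlib

/-- A strict partition, encoded as a strictly decreasing list of positive integers. -/
def IsStrictPartition (l : List ℕ) : Prop :=
  List.Pairwise (· > ·) l ∧ ∀ x ∈ l, 0 < x

/-- The set of bar lengths in the (0-indexed) `i`-th row of a strict partition `l`: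
`{λᵢ + λⱼ : i < j ≤ ℓ} ∪ ({1,…,λᵢ} \ {λᵢ − λⱼ : i < j ≤ ℓ})`. -/
def barLengths (l : List ℕ) (i : ℕ) : Finset ℕ :=
  ((Finset.Ioo i l.length).image fun j => l.getD i 0 + l.getD j 0) ∪
    (Finset.Icc 1 (l.getD i 0) \
      ((Finset.Ioo i l.length).image fun j => l.getD i 0 - l.getD j 0))

/-- `l` is an `s`-bar-core: `s` is not a bar length in any row. -/
def IsBarCore (l : List ℕ) (s : ℕ) : Prop :=
  ∀ i, i < l.length → s ∉ barLengths l i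

/-- The shifted hook length of the box in row `i`, column `c` (both 0-indexed, where the
`i`-th row of the shifted Young diagram occupies columns `i, …, λᵢ + i − 1`): the number of
boxes to its right in row `i` together with itself, plus the number of boxes below it in
column `c`, plus the number of boxes of row `c + 1` if that row exists. -/
def shiftedHook (l : List ℕ) (i c : ℕ) : ℕ :=
  (l.getD i 0 + i - c) +
    ((Finset.Ioc i c).filter fun i' => c < l.getD i' 0 + i').card +
    l.getD (c + 1) 0

/-- `l` is an `s`-CSYD: no shifted hook length of the shifted Young diagram `S(λ)`
is divisible by `s`. -/
def IsCSYD (l : List ℕ) (s : ℕ) : Prop :=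
  ∀ i c, i < l.length → i ≤ c → c < l.getD i 0 + i → ¬ s ∣ shiftedHook l i c

/-- The `i`-th part (0-indexed) of the doubled distinct partition `λλ`, read off from the
Frobenius symbol `(λ₁,…,λ_ℓ ; λ₁−1,…,λ_ℓ−1)`: for `i < ℓ` the part is `λᵢ + i + 1`
(1-indexed: `λᵢ + i`), and for `ℓ ≤ i` the part is determined by the column lengths
`λⱼ + j − 1` (1-indexed). -/
def ddPart (l : List ℕ) (i : ℕ) : ℕ :=
  if i < l.length then l.getD i 0 + i + 1
  else ((Finset.range l.length).filter fun j => i + 1 ≤ l.getD j 0 + j).card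

/-- The doubled distinct partition `λλ` of a strict partition `l`, as a list of parts. -/
def doubledDistinct (l : List ℕ) : List ℕ :=
  (List.range (l.getD 0 0)).map (ddPart l)

/-- Ordinary hook length of the box in row `i`, column `j` (0-indexed) of a partition `m`. -/
def hookLen (m : List ℕ) (i j : ℕ) : ℕ :=
  (m.getD i 0 - j) + ((Finset.Ioo i m.length).filter fun i' => j < m.getD i' 0).card

/-- `m` is an `s`-core: no hook length is divisible by `s`. -/
def IsCore (m : List ℕ) (s : ℕ) : Prop :=
  ∀ i j, i < m.length → j < m.getD i 0 → ¬ s ∣ hookLen m i j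

/-- NE lattice paths from `(0,0)` to `(a,b)`, encoded as lists of steps where
`false` is an east step `E = (1,0)` and `true` is a north step `N = (0,1)`. -/
def NEPaths (a b : ℕ) : Set (List Bool) :=
  {w | w.count false = a ∧ w.count true = b}

/-- A step of a free Motzkin path. -/
inductive MStep : Type
  | U : MStep
  | F : MStep
  | D : MStep
deriving DecidableEq

/-- The height change of a step: `U = (1,1)`, `F = (1,0)`, `D = (1,−1)`. -/
def MStep.ht : MStep → ℤ
  | .U => 1
  | .F => 0
  | .D => -1

/-- Free Motzkin paths of type `(p,q)`: lattice paths from `(0,0)` to `(p,q)` with steps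
`U = (1,1)`, `F = (1,0)` and `D = (1,−1)`, encoded as lists of steps. -/
def FreeMotzkin (p : ℕ) (q : ℤ) : Set (List MStep) :=
  {w | w.length = p ∧ (w.map MStep.ht).sum = q}

/-- `multinom n a b c = n! / (a! · b! · c!)`. -/
def multinom (n a b c : ℕ) : ℕ :=
  n.factorial / (a.factorial * b.factorial * c.factorial)

/-- All words over `MStep` of length `n`. -/
def words : ℕ → Finset (List MStep)
  | 0 => {[]}
  | n+1 => ((words n).image (MStep.U :: ·)) ∪ ((words n).image (MStep.F :: ·)) ∪
      ((words n).image (MStep.D :: ·))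

lemma mem_words : ∀ {n : ℕ} {w : List MStep}, w ∈ words n ↔ w.length = n
  | 0, w => by cases w <;> simp [words]
  | n+1, w => by
    cases w with
    | nil => simp [words]
    | cons c t =>
      simp only [words, Finset.mem_union, Finset.mem_image, List.length_cons]
      constructor
      · rintro ((⟨t', ht', h⟩ | ⟨t', ht', h⟩) | ⟨t', ht', h⟩) <;>
          · obtain ⟨-, rfl⟩ := List.cons.inj h.symm
            rw [mem_words.1 ht']
      · intro h
        have ht : t ∈ words n := mem_words.2 (by omega)
        cases c
        · exact Or.inl (Or.inl ⟨t, ht, rfl⟩)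
        · exact Or.inl (Or.inr ⟨t, ht, rfl⟩)
        · exact Or.inr ⟨t, ht, rfl⟩

def cnt (n x y : ℕ) : ℕ :=
  ((words n).filter fun w => w.count MStep.U = x ∧ w.count MStep.D = y).card

lemma cnt_succ (n x y : ℕ) :
    cnt (n+1) x y =
      ((words n).filter fun w => w.count MStep.U + 1 = x ∧ w.count MStep.D = y).card
      + cnt n x y
      + ((words n).filter fun w => w.count MStep.U = x ∧ w.count MStep.D + 1 = y).card := by
  have hinj : ∀ c : MStep, Function.Injective (c :: ·) := fun c => List.cons_injective
  have hdisj : ∀ c c' : MStep, c ≠ c' →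
      Disjoint ((words n).image (c :: ·)) ((words n).image (c' :: ·)) := by
    intro c c' hcc
    rw [Finset.disjoint_left]
    rintro w hw hw'
    simp only [Finset.mem_image] at hw hw'
    obtain ⟨t, -, rfl⟩ := hw
    obtain ⟨t', -, h⟩ := hw'
    exact hcc (List.cons.inj h).1.symm
  have d1 : Disjoint ((words n).image (MStep.U :: ·)) ((words n).image (MStep.F :: ·)) :=
    hdisj MStep.U MStep.F (by decide)
  have d2 : Disjoint (((words n).image (MStep.U :: ·)) ∪ ((words n).image (MStep.F :: ·)))
      ((words n).image (MStep.D :: ·)) :=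
    Finset.disjoint_union_left.2
      ⟨hdisj MStep.U MStep.D (by decide), hdisj MStep.F MStep.D (by decide)⟩
  unfold cnt
  rw [show words (n+1) = ((words n).image (MStep.U :: ·)) ∪ ((words n).image (MStep.F :: ·)) ∪
      ((words n).image (MStep.D :: ·)) from rfl]
  rw [Finset.filter_union, Finset.filter_union,
    Finset.card_union_of_disjoint (Disjoint.mono
      (Finset.union_subset_union (Finset.filter_subset _ _) (Finset.filter_subset _ _))
      (Finset.filter_subset _ _) d2),
    Finset.card_union_of_disjoint (Disjoint.mono
      (Finset.filter_subset _ _) (Finset.filter_subset _ _) d1)]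
  · rw [Finset.filter_image, Finset.filter_image, Finset.filter_image,
      Finset.card_image_of_injective _ (hinj _), Finset.card_image_of_injective _ (hinj _),
      Finset.card_image_of_injective _ (hinj _)]
    congr 1
    · congr 1 <;>
        · apply congrArg Finset.card; ext w
          simp [Finset.mem_filter, List.count_cons]
    · apply congrArg Finset.card; ext w
      simp [Finset.mem_filter, List.count_cons]

lemma cnt_eq : ∀ (n x y : ℕ), cnt n x y = n.choose x * (n - x).choose y := by
  intro n
  induction n with
  | zero =>
    intro x y
    unfold cnt
    rcases x with _ | x <;> rcases y with _ | y <;>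
      simp [words, Finset.filter_singleton, Nat.choose]
  | succ n ih =>
    intro x y
    rw [cnt_succ]
    have hU0 : ∀ y', ((words n).filter fun w =>
        w.count MStep.U + 1 = 0 ∧ w.count MStep.D = y').card = 0 := by
      intro y'
      rw [Finset.card_eq_zero, Finset.filter_eq_empty_iff]
      intro w _; simp
    have hD0 : ∀ x', ((words n).filter fun w =>
        w.count MStep.U = x' ∧ w.count MStep.D + 1 = 0).card = 0 := by
      intro x'
      rw [Finset.card_eq_zero, Finset.filter_eq_empty_iff]
      intro w _; simp
    have hUs : ∀ s y', ((words n).filter fun w =>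
        w.count MStep.U + 1 = s + 1 ∧ w.count MStep.D = y').card = cnt n s y' := by
      intro s y'
      apply congrArg Finset.card; ext w
      simp [Finset.mem_filter, cnt]
    have hDs : ∀ x' t, ((words n).filter fun w =>
        w.count MStep.U = x' ∧ w.count MStep.D + 1 = t + 1).card = cnt n x' t := by
      intro x' t
      apply congrArg Finset.card; ext w
      simp [Finset.mem_filter, cnt]
    rcases x with _ | s <;> rcases y with _ | t
    · rw [hU0, hD0, ih]; simp
    · rw [hU0, hDs, ih, ih]
      simp [Nat.choose_succ_succ, Nat.add_comm]
    · rw [hUs, hD0, ih, ih]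
      simp [Nat.choose_succ_succ, Nat.add_mul]
    · rw [hUs, hDs, ih, ih, ih]
      have hns : n + 1 - (s + 1) = n - s := by omega
      have p1 : (n + 1).choose (s + 1) = n.choose s + n.choose (s + 1) :=
        Nat.choose_succ_succ n s
      rcases Nat.lt_or_ge s n with h | h
      · have e1 : n - s = (n - (s + 1)) + 1 := by omega
        have p2 : (n - s).choose (t + 1)
            = (n - (s + 1)).choose t + (n - (s + 1)).choose (t + 1) := by
          rw [e1, Nat.choose_succ_succ]
        rw [hns, p1, p2]
        ring
      · rcases Nat.eq_or_lt_of_le h with h' | h'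
        · subst h'
          simp [Nat.sub_self, Nat.choose_succ_self, Nat.choose_zero_succ]
        · rw [Nat.choose_eq_zero_of_lt (by omega : n < s),
            Nat.choose_eq_zero_of_lt (by omega : n < s + 1),
            Nat.choose_eq_zero_of_lt (by omega : n + 1 < s + 1)]
          simp

lemma sum_ht (w : List MStep) :
    (w.map MStep.ht).sum = (w.count MStep.U : ℤ) - w.count MStep.D := by
  induction w with
  | nil => simp
  | cons c t ih =>
    cases c <;> simp [List.count_cons, MStep.ht, ih] <;> push_cast <;> ring

lemma counts_total (w : List MStep) :
    w.count MStep.U + w.count MStep.F + w.count MStep.D = w.length := by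
  induction w with
  | nil => simp
  | cons c t ih => cases c <;> simp [List.count_cons] <;> omega

lemma head_count {w : List MStep} {c : MStep} (h : w.head? = some c) :
    1 ≤ w.count c := by
  cases w with
  | nil => simp at h
  | cons d t =>
    simp only [List.head?_cons, Option.some.injEq] at h
    subst h
    simp [List.count_cons]

lemma multinom_eq (n x y z : ℕ) (h : x + y + z = n) :
    multinom n x y z = n.choose x * (n - x).choose y := by
  have hx : x ≤ n := by omega
  have hy : y ≤ n - x := by omega
  have hz : n - x - y = z := by omega
  have e1 : n.choose x * x.factorial * (n - x).factorial = n.factorial :=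
    Nat.choose_mul_factorial_mul_factorial hx
  have e2 : (n - x).choose y * y.factorial * (n - x - y).factorial = (n - x).factorial :=
    Nat.choose_mul_factorial_mul_factorial hy
  rw [hz] at e2
  unfold multinom
  rw [Nat.div_eq_of_eq_mul_left (by positivity)]
  rw [← e1, ← e2]
  ring

lemma filter_head (n : ℕ) (c : MStep) (p : List MStep → Prop) [DecidablePred p] :
    ((words (n+1)).filter fun w => w.head? = some c ∧ p w)
      = ((words n).filter fun t => p (c :: t)).image (c :: ·) := by
  ext w
  simp only [Finset.mem_filter, Finset.mem_image, mem_words]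
  constructor
  · rintro ⟨h1, h2, h3⟩
    cases w with
    | nil => simp at h2
    | cons d t =>
      simp only [List.head?_cons, Option.some.injEq] at h2
      subst h2
      exact ⟨t, ⟨by simpa using h1, h3⟩, rfl⟩
  · rintro ⟨t, ⟨h1, h2⟩, rfl⟩
    exact ⟨by simpa using h1, rfl, h2⟩

/-- For positive integers `a` and `b`, the number of free Motzkin paths of
type `(a+b, −b)` that start with a down step or a flat step equals
`Σ_{i=0}^{a} multinomial(a+b−1 ; ⌊i/2⌋, b+⌊(i−1)/2⌋, a−i)`, where the middle entry
`b + ⌊(i−1)/2⌋` is written as `(b−1) + ⌊(i+1)/2⌋` (so that the `i = 0` term is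
`multinomial(a+b−1; 0, b−1, a)`, as in the convention `⌊(0−1)/2⌋ = −1`). -/
theorem free_motzkin_count_start (a b : ℕ) (ha : 0 < a) (hb : 0 < b) :
    {w : List MStep | w ∈ FreeMotzkin (a + b) (-(b : ℤ)) ∧
        (w.head? = some MStep.D ∨ w.head? = some MStep.F)}.ncard =
      ∑ i ∈ Finset.range (a + 1),
        multinom (a + b - 1) (i / 2) (b - 1 + (i + 1) / 2) (a - i) := by
  classical
  set S : Finset (List MStep) := (words (a + b)).filter fun w =>
    w.count MStep.D = w.count MStep.U + b ∧
      (w.head? = some MStep.D ∨ w.head? = some MStep.F) with hS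
  have hset : {w : List MStep | w ∈ FreeMotzkin (a + b) (-(b : ℤ)) ∧
      (w.head? = some MStep.D ∨ w.head? = some MStep.F)} = ↑S := by
    ext w
    simp only [Set.mem_setOf_eq, Finset.coe_filter, FreeMotzkin, Set.mem_setOf_eq, hS,
      mem_words, Finset.mem_filter]
    constructor
    · rintro ⟨⟨h1, h2⟩, h3⟩
      refine ⟨h1, ?_, h3⟩
      rw [sum_ht] at h2
      omega
    · rintro ⟨h1, h2, h3⟩
      refine ⟨⟨h1, ?_⟩, h3⟩
      rw [sum_ht]
      omega
  rw [hset, Set.ncard_coe_finset]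
  set f : List MStep → ℕ := fun w =>
    2 * w.count MStep.U + (if w.head? = some MStep.F then 1 else 0) with hf
  have hmem : ∀ w ∈ S, f w ∈ Finset.range (a + 1) := by
    intro w hw
    simp only [hS, Finset.mem_filter, mem_words] at hw
    obtain ⟨hlen, hcd, hh⟩ := hw
    have htot := counts_total w
    rw [hlen] at htot
    simp only [Finset.mem_range, hf]
    rcases hh with h | h
    · rw [h]; simp; omega
    · rw [h]
      have := head_count h
      simp
      omega
  rw [Finset.card_eq_sum_card_fiberwise hmem]
  refine Finset.sum_congr rfl fun i hi => ?_
  simp only [Finset.mem_range] at hi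
  have hab : a + b = (a + b - 1) + 1 := by omega
  set n' := a + b - 1 with hn'
  rcases Nat.even_or_odd i with ⟨u, hu⟩ | ⟨u, hu⟩
  · -- i = 2u, head D
    have hfib : S.filter (fun w => f w = i)
        = (words (n' + 1)).filter fun w => w.head? = some MStep.D ∧
            (w.count MStep.U = u ∧ w.count MStep.D = u + b) := by
      rw [hS, Finset.filter_filter, ← hab]
      apply Finset.filter_congr
      intro w _
      simp only [hf]
      constructor
      · rintro ⟨⟨hcd, hh⟩, henc⟩
        rcases hh with h | h
        · rw [h] at henc ⊢
          rw [if_neg (show ¬ (some MStep.D = some MStep.F) by simp)] at henc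
          refine ⟨rfl, by omega, by omega⟩
        · rw [h] at henc
          simp at henc
          exact absurd henc (by omega)
      · rintro ⟨hh, h1, h2⟩
        rw [hh]
        refine ⟨⟨by omega, Or.inl rfl⟩, ?_⟩
        rw [if_neg (show ¬ (some MStep.D = some MStep.F) by simp)]
        omega
    rw [hfib, filter_head]
    rw [Finset.card_image_of_injective _ (List.cons_injective)]
    have hcnt : ((words n').filter fun t =>
        (MStep.D :: t).count MStep.U = u ∧ (MStep.D :: t).count MStep.D = u + b).card
        = cnt n' u (u + (b - 1)) := by
      apply congrArg Finset.card
      apply Finset.filter_congr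
      intro t _
      simp [List.count_cons]
      omega
    rw [hcnt, cnt_eq, multinom_eq n' (i / 2) (b - 1 + (i + 1) / 2) (a - i) (by omega)]
    have e1 : i / 2 = u := by omega
    have e2 : b - 1 + (i + 1) / 2 = u + (b - 1) := by omega
    rw [e1, e2]
  · -- i = 2u + 1, head F
    have hfib : S.filter (fun w => f w = i)
        = (words (n' + 1)).filter fun w => w.head? = some MStep.F ∧
            (w.count MStep.U = u ∧ w.count MStep.D = u + b) := by
      rw [hS, Finset.filter_filter, ← hab]
      apply Finset.filter_congr
      intro w _
      simp only [hf]
      constructor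
      · rintro ⟨⟨hcd, hh⟩, henc⟩
        rcases hh with h | h
        · rw [h] at henc
          rw [if_neg (show ¬ (some MStep.D = some MStep.F) by simp)] at henc
          omega
        · rw [h] at henc ⊢
          simp at henc
          refine ⟨rfl, by omega, by omega⟩
      · rintro ⟨hh, h1, h2⟩
        rw [hh]
        refine ⟨⟨by omega, Or.inr rfl⟩, ?_⟩
        simp
        omega
    rw [hfib, filter_head]
    rw [Finset.card_image_of_injective _ (List.cons_injective)]
    have hcnt : ((words n').filter fun t =>
        (MStep.F :: t).count MStep.U = u ∧ (MStep.F :: t).count MStep.D = u + b).card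
        = cnt n' u (u + b) := by
      apply congrArg Finset.card
      apply Finset.filter_congr
      intro t _
      simp [List.count_cons]
    rw [hcnt, cnt_eq, multinom_eq n' (i / 2) (b - 1 + (i + 1) / 2) (a - i) (by omega)]
    have e1 : i / 2 = u := by omega
    have e2 : b - 1 + (i + 1) / 2 = u + b := by omega
    rw [e1, e2]
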